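/- arXiv:1604.05649 — 5 statements merged into one kernel-verified Lean document; each statement's English description precedes it below -/
import Mathlib

section
/- Let J = (1/m)·11ᵀ ∈ ℝ^{m×m} be the averaging matrix and let Π_X denote coordinatewise projection of a vector in ℝ^m onto the box X = [-R, R]^m for some R > 0. Then for every x ∈ ℝ^m, ‖(I - J)Π_X(x)‖₂ ≤ ‖(I - J)x‖₂; i.e., projecting onto a box does not increase the deviation from the mean. -/
open Finset Real

/-! Clipping each coordinate to `[-R, R]` is 1-Lipschitz. The mean `μ` minimises `a ↦ ∑ (yᵢ - a)²`,
so the spread of the clipped vector is at most `∑ (clip xᵢ - clip μ)²`, which the Lipschitz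
bound compares termwise with `∑ (xᵢ - μ)²`. -/

namespace Finset

variable {ι : Type*} (s : Finset ι)

theorem sum_sub_mean_eq_zero (y : ι → ℝ) : ∑ i ∈ s, (y i - (∑ j ∈ s, y j) / #s) = 0 := by
  rcases s.eq_empty_or_nonempty with rfl | hs
  · simp
  · rw [sum_sub_distrib, sum_const, nsmul_eq_mul, mul_div_cancel₀ _ (by positivity), sub_self]

theorem sum_sq_sub_mean_le (y : ι → ℝ) (a : ℝ) :
    ∑ i ∈ s, (y i - (∑ j ∈ s, y j) / #s) ^ 2 ≤ ∑ i ∈ s, (y i - a) ^ 2 := by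
  set μ := (∑ j ∈ s, y j) / #s
  have hsplit : ∀ i, (y i - a) ^ 2 = (y i - μ) ^ 2 + 2 * (μ - a) * (y i - μ) + (μ - a) ^ 2 :=
    fun i => by ring
  have hcentred : ∑ i ∈ s, (y i - μ) = 0 := s.sum_sub_mean_eq_zero y
  simp only [hsplit, sum_add_distrib, ← mul_sum, sum_const, nsmul_eq_mul, hcentred]
  nlinarith [sq_nonneg (μ - a), (#s).cast_nonneg (α := ℝ)]

theorem sum_sq_sub_mean_comp_le {f : ℝ → ℝ} (hf : LipschitzWith 1 f) (x : ι → ℝ) :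
    ∑ i ∈ s, (f (x i) - (∑ j ∈ s, f (x j)) / #s) ^ 2
      ≤ ∑ i ∈ s, (x i - (∑ j ∈ s, x j) / #s) ^ 2 := by
  set μ := (∑ j ∈ s, x j) / #s
  calc _ ≤ ∑ i ∈ s, (f (x i) - f μ) ^ 2 := s.sum_sq_sub_mean_le _ _
    _ ≤ ∑ i ∈ s, (x i - μ) ^ 2 := sum_le_sum fun i _ => by
      simpa [sq_le_sq, ← Real.dist_eq] using hf.dist_le_mul (x i) μ

end Finset

theorem box_projection_reduces_disagreement_general
    (m : ℕ) (R : ℝ) (x : Fin m → ℝ) :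
    Real.sqrt (∑ i, ((fun j => max (-R) (min R (x j))) i
        - (∑ j, max (-R) (min R (x j))) / m) ^ 2)
      ≤ Real.sqrt (∑ i, (x i - (∑ j, x j) / m) ^ 2) := by
  have hclip : LipschitzWith 1 fun t : ℝ => max (-R) (min R t) :=
    (LipschitzWith.id.const_min R).const_max (-R)
  apply Real.sqrt_le_sqrt
  simpa only [card_univ, Fintype.card_fin] using univ.sum_sq_sub_mean_comp_le hclip x

/-- Projecting each coordinate onto the box `[-R, R]` does not increase
the deviation from the mean. -/
theorem box_projection_reduces_disagreement
    (m : ℕ) (hm : 0 < m) (R : ℝ) (hR : 0 < R) (x : Fin m → ℝ) :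
    Real.sqrt (∑ i, ((fun j => max (-R) (min R (x j))) i
        - (∑ j, max (-R) (min R (x j))) / m) ^ 2)
      ≤ Real.sqrt (∑ i, (x i - (∑ j, x j) / m) ^ 2) :=
  box_projection_reduces_disagreement_general m R x
end

section
/- Let x ∈ ℝ^m with coordinates x₁,…,x_ℓ < -R and x_{ℓ+1},…,x_m ≥ -R, and let x' be obtained from x by replacing x₁,…,x_ℓ each by -R and leaving the other coordinates unchanged. Then ∑ᵢ (x'ᵢ - x̄')² ≤ ∑ᵢ (xᵢ - x̄)², where x̄ and x̄' are the means of x and x' respectively. -/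
/-!
The sum of squared deviations from the mean equals `1 / (2m)` times the sum of all squared
pairwise differences. Clipping is `x ↦ max x (-R)`, which is `1`-Lipschitz, so it shrinks every
pairwise difference and hence the variance.
-/

open Finset

variable {ι : Type*}

theorem Finset.sum_sq_sub_mean_eq (s : Finset ι) (f : ι → ℝ) :
    ∑ i ∈ s, (f i - (∑ j ∈ s, f j) / #s) ^ 2
      = (∑ i ∈ s, ∑ j ∈ s, (f i - f j) ^ 2) / (2 * #s) := by
  rcases s.eq_empty_or_nonempty with rfl | hs
  · simp
  have hn : (#s : ℝ) ≠ 0 := by positivity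
  set S := ∑ j ∈ s, f j
  simp only [sub_sq, sum_add_distrib, sum_sub_distrib, sum_const, nsmul_eq_mul, ← mul_sum,
    ← sum_mul]
  field_simp
  ring

theorem Finset.sum_sq_sub_mean_le_of_sq_sub_le {s : Finset ι} {f g : ι → ℝ}
    (h : ∀ i ∈ s, ∀ j ∈ s, (g i - g j) ^ 2 ≤ (f i - f j) ^ 2) :
    ∑ i ∈ s, (g i - (∑ j ∈ s, g j) / #s) ^ 2 ≤ ∑ i ∈ s, (f i - (∑ j ∈ s, f j) / #s) ^ 2 := by
  rw [sum_sq_sub_mean_eq, sum_sq_sub_mean_eq]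
  gcongr ?_ / _
  exact sum_le_sum fun i hi => sum_le_sum fun j hj => h i hi j hj

theorem Finset.sum_sq_sub_mean_max_le (s : Finset ι) (f : ι → ℝ) (c : ℝ) :
    ∑ i ∈ s, (max (f i) c - (∑ j ∈ s, max (f j) c) / #s) ^ 2
      ≤ ∑ i ∈ s, (f i - (∑ j ∈ s, f j) / #s) ^ 2 :=
  sum_sq_sub_mean_le_of_sq_sub_le fun _ _ _ _ => sq_le_sq.mpr (abs_max_sub_max_le_abs _ _ _)

theorem clip_below_reduces_variance_general
    (m ℓ : ℕ) (R : ℝ)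
    (x : Fin m → ℝ)
    (hlow : ∀ i : Fin m, (i : ℕ) < ℓ → x i < -R)
    (hhigh : ∀ i : Fin m, ℓ ≤ (i : ℕ) → -R ≤ x i) :
    let x' : Fin m → ℝ := fun i => if (i : ℕ) < ℓ then -R else x i
    ∑ i, (x' i - (∑ j, x' j) / m) ^ 2 ≤ ∑ i, (x i - (∑ j, x j) / m) ^ 2 := by
  intro x'
  have hx' : x' = fun i => max (x i) (-R) := by
    ext i
    by_cases hi : (i : ℕ) < ℓ
    · simp [x', hi, (hlow i hi).le]
    · simp [x', hi, hhigh i (not_lt.mp hi)]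
  simpa [hx'] using sum_sq_sub_mean_max_le univ x (-R)

/-- Clipping the coordinates that lie strictly below `-R` up to `-R`
does not increase the sum of squared deviations from the mean. -/
theorem clip_below_reduces_variance
    (m ℓ : ℕ) (hℓ : 1 ≤ ℓ) (hℓm : ℓ ≤ m) (R : ℝ) (hR : 0 < R)
    (x : Fin m → ℝ)
    (hlow : ∀ i : Fin m, (i : ℕ) < ℓ → x i < -R)
    (hhigh : ∀ i : Fin m, ℓ ≤ (i : ℕ) → -R ≤ x i) :
    let x' : Fin m → ℝ := fun i => if (i : ℕ) < ℓ then -R else x i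
    ∑ i, (x' i - (∑ j, x' j) / m) ^ 2 ≤ ∑ i, (x i - (∑ j, x j) / m) ^ 2 :=
  clip_below_reduces_variance_general m ℓ R x hlow hhigh
end

section
/- For λ ∈ (0,1) and integer t ≥ 2, the quantity I_t := ∫₁^{√(t-1)} λ^{-u²} du satisfies I_t² ≤ π λ^{-2t} / (4 t (log λ)²). -/
open Real intervalIntegral

/-!
Write `c = -log λ > 0`, so that the integrand is `exp (c u²)` and `t = s² + 1` with `s = √(t - 1)`.
Since `u ↦ c u²` is convex, on `[a, b]` it lies below its chord `c (a + b) u - c a b`, and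
integrating the exponential of the chord gives `∫ₐᵇ exp (c u²) ≤ (exp (c b²) - exp (c a²)) / (c (a + b))`.
For `s ≤ 2` the chord over `[1, s]` already suffices; for `s ≥ 2` one splits at `s / 2`, where the
chord over `[s / 2, s]` has the better slope `3 c s / 2`, and gets `c s I ≤ (17/24) exp (c s²)`.
In both cases a bound `c d I ≤ q exp (c t)` squares to the claim because `4 t q² ≤ π d²`.
-/

theorem integral_exp_mul_add (k d a b : ℝ) (hk : k ≠ 0) :
    ∫ u in a..b, exp (k * u + d) = (exp (k * b + d) - exp (k * a + d)) / k := by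
  rw [integral_comp_mul_add (fun x => exp x) hk, integral_exp, smul_eq_mul, inv_mul_eq_div]

theorem integral_exp_mul_sq_le {c a b : ℝ} (hc : 0 < c) (hab : a ≤ b) (hab₀ : a + b ≠ 0) :
    ∫ u in a..b, exp (c * u ^ 2) ≤ (exp (c * b ^ 2) - exp (c * a ^ 2)) / (c * (a + b)) := by
  have hchord : ∀ u ∈ Set.Icc a b, c * u ^ 2 ≤ c * (a + b) * u + -(c * a * b) := fun u hu => by
    nlinarith [mul_nonneg hc.le (mul_nonneg (sub_nonneg.2 hu.1) (sub_nonneg.2 hu.2))]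
  calc ∫ u in a..b, exp (c * u ^ 2)
      ≤ ∫ u in a..b, exp (c * (a + b) * u + -(c * a * b)) :=
        integral_mono_on hab ((by fun_prop : Continuous _).intervalIntegrable _ _)
          ((by fun_prop : Continuous _).intervalIntegrable _ _) fun u hu => exp_le_exp.2 (hchord u hu)
    _ = (exp (c * b ^ 2) - exp (c * a ^ 2)) / (c * (a + b)) := by
        rw [integral_exp_mul_add _ _ _ _ (mul_ne_zero hc.ne' hab₀)]
        ring_nf

theorem mul_integral_exp_mul_sq_le_of_one_le {c s : ℝ} (hc : 0 < c) (hs : 1 ≤ s) :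
    c * (1 + s) * ∫ u in (1 : ℝ)..s, exp (c * u ^ 2) ≤ exp (c * s ^ 2) := by
  have hchord := integral_exp_mul_sq_le hc hs (by positivity)
  rw [le_div_iff₀' (by positivity)] at hchord
  linarith [exp_pos (c * 1 ^ 2)]

theorem mul_integral_exp_mul_sq_le_of_two_le {c s : ℝ} (hc : 0 < c) (hs : 2 ≤ s) :
    c * s * ∫ u in (1 : ℝ)..s, exp (c * u ^ 2) ≤ 17 / 24 * exp (c * s ^ 2) := by
  set E := exp (c * (s / 2) ^ 2) with hE
  have hE4 : exp (c * s ^ 2) = E ^ 4 := by rw [hE, ← exp_nat_mul]; ring_nf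
  have hE1 : 1 ≤ E := one_le_exp (by positivity)
  have hsplit := integral_add_adjacent_intervals (μ := MeasureTheory.volume)
    (f := fun u => exp (c * u ^ 2)) (a := 1) (b := s / 2) (c := s)
    ((by fun_prop : Continuous _).intervalIntegrable _ _)
    ((by fun_prop : Continuous _).intervalIntegrable _ _)
  have hleft : c * s * ∫ u in (1 : ℝ)..s / 2, exp (c * u ^ 2) ≤ 2 * (E - 1) := by
    have h := integral_exp_mul_sq_le hc (by linarith : (1 : ℝ) ≤ s / 2) (by positivity)
    rw [← hE] at h
    have hc1 : 1 ≤ exp (c * 1 ^ 2) := one_le_exp (by positivity)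
    have h' : ∫ u in (1 : ℝ)..s / 2, exp (c * u ^ 2) ≤ (E - 1) / (c * (s / 2)) :=
      h.trans (div_le_div₀ (by linarith) (by linarith) (by positivity) (by nlinarith))
    rw [le_div_iff₀' (by positivity)] at h'
    linarith
  have hright : c * s * ∫ u in s / 2..s, exp (c * u ^ 2) ≤ 2 / 3 * (E ^ 4 - E) := by
    have h := integral_exp_mul_sq_le hc (by linarith : s / 2 ≤ s) (by positivity)
    rw [le_div_iff₀' (by positivity), ← hE, hE4] at h
    nlinarith
  -- `E⁴ - 32 E + 48 = (E - 2)² (E² + 4 E + 12)`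
  have hpoly : 0 ≤ (E - 2) ^ 2 * (E ^ 2 + 4 * E + 12) := by positivity
  rw [← hsplit, mul_add, hE4]
  nlinarith

theorem sq_le_div_of_mul_le {I c d q T E : ℝ} (hI : 0 ≤ I) (hc : 0 < c) (hd : 0 < d)
    (hT : 0 < T) (hbound : c * d * I ≤ q * E) (hq : 4 * T * q ^ 2 ≤ π * d ^ 2) :
    I ^ 2 ≤ π * E ^ 2 / (4 * T * c ^ 2) := by
  rw [le_div_iff₀ (by positivity)]
  have hsq : (c * d * I) ^ 2 ≤ (q * E) ^ 2 := pow_le_pow_left₀ (by positivity) hbound 2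
  have hd2 : 0 < d ^ 2 := by positivity
  refine le_of_mul_le_mul_right ?_ hd2
  calc I ^ 2 * (4 * T * c ^ 2) * d ^ 2 = 4 * T * (c * d * I) ^ 2 := by ring
    _ ≤ 4 * T * q ^ 2 * E ^ 2 := by nlinarith
    _ ≤ π * d ^ 2 * E ^ 2 := mul_le_mul_of_nonneg_right hq (sq_nonneg E)
    _ = π * E ^ 2 * d ^ 2 := by ring

theorem sq_integral_exp_mul_sq_le {c T : ℝ} (hc : 0 < c) (hT : 2 ≤ T) :
    (∫ u in (1 : ℝ)..√(T - 1), exp (c * u ^ 2)) ^ 2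
      ≤ π * exp (c * (2 * T)) / (4 * T * c ^ 2) := by
  set s := √(T - 1)
  have hsT : T = s ^ 2 + 1 := by rw [sq_sqrt (by linarith)]; ring
  have hs : 1 ≤ s := by rw [show (1 : ℝ) = √1 by simp]; exact sqrt_le_sqrt (by linarith)
  have hI : 0 ≤ ∫ u in (1 : ℝ)..s, exp (c * u ^ 2) :=
    integral_nonneg hs fun u _ => (exp_pos _).le
  have hexp : exp (c * s ^ 2) ≤ exp (c * T) := exp_le_exp.2 (by nlinarith)
  have hsq : exp (c * (2 * T)) = exp (c * T) ^ 2 := by rw [← exp_nat_mul]; ring_nf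
  rw [hsq]
  rcases le_total s 2 with hs2 | hs2
  · refine sq_le_div_of_mul_le (q := 1) hI hc (by positivity : 0 < 1 + s) (by linarith) ?_ ?_
    · linarith [mul_integral_exp_mul_sq_le_of_one_le hc hs]
    · rw [hsT]
      nlinarith [mul_le_mul_of_nonneg_right pi_gt_three.le (sq_nonneg (1 + s)),
        mul_nonneg (sub_nonneg.2 hs) (sub_nonneg.2 hs2)]
  · refine sq_le_div_of_mul_le (q := 17 / 24) hI hc (by linarith : 0 < s) (by linarith) ?_ ?_
    · linarith [mul_integral_exp_mul_sq_le_of_two_le hc hs2]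
    · rw [hsT]
      nlinarith [mul_le_mul_of_nonneg_right pi_gt_three.le (sq_nonneg s)]

/-- Bound on the square of the Gaussian-type integral `I_t = ∫₁^{√(t-1)} λ^{-u²} du`. -/
theorem gaussian_integral_sq_bound
    (lam : ℝ) (hlam₀ : 0 < lam) (hlam₁ : lam < 1)
    (t : ℕ) (ht : 2 ≤ t) :
    (∫ u in (1:ℝ)..Real.sqrt ((t : ℝ) - 1), lam ^ (-(u ^ 2))) ^ 2
      ≤ π * lam ^ (-(2 * (t : ℝ))) / (4 * t * (Real.log lam) ^ 2) := by
  have hc : 0 < -log lam := neg_pos.2 (log_neg hlam₀ hlam₁)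
  have hpow : ∀ y : ℝ, lam ^ (-y) = exp (-log lam * y) := fun y => by
    rw [rpow_def_of_pos hlam₀]; ring_nf
  simp_rw [hpow, ← neg_sq (log lam)]
  exact sq_integral_exp_mul_sq_le hc (by exact_mod_cast ht)
end

section
/- For all θ ∈ [0, π/4], one has 1/cos²(θ) ≤ 1 + 4θ/π. -/
open Real Set

/-!
On `[0, π/2)` the derivative `sec²` of `tan` is increasing, so `tan` is convex there. A convex
function vanishing at `0` lies below its chords from `0`; the chord to `(π/4, 1)` gives
`tan θ ≤ 4θ/π ≤ 1`, hence `sec² θ = 1 + tan² θ ≤ 1 + tan θ ≤ 1 + 4θ/π`.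
-/

theorem ConvexOn.map_smul_le_smul {𝕜 E β : Type*} [Ring 𝕜] [PartialOrder 𝕜] [IsOrderedRing 𝕜]
    [AddCommGroup E] [Module 𝕜 E] [AddCommMonoid β] [PartialOrder β] [IsOrderedAddMonoid β]
    [Module 𝕜 β] [PosSMulMono 𝕜 β] {s : Set E} {f : E → β} (hf : ConvexOn 𝕜 s f)
    (h0 : (0 : E) ∈ s) (hf0 : f 0 ≤ 0) {x : E} (hx : x ∈ s) {t : 𝕜} (ht0 : 0 ≤ t) (ht1 : t ≤ 1) :
    f (t • x) ≤ t • f x := by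
  have h := hf.2 h0 hx (sub_nonneg.2 ht1) ht0 (sub_add_cancel 1 t)
  rw [smul_zero, zero_add] at h
  exact h.trans (add_le_of_nonpos_left (smul_nonpos_of_nonneg_of_nonpos (sub_nonneg.2 ht1) hf0))

theorem Real.cos_pos_of_mem_Ico {x : ℝ} (hx : x ∈ Ico 0 (π / 2)) : 0 < cos x :=
  cos_pos_of_mem_Ioo ⟨by linarith [hx.1, pi_pos], hx.2⟩

theorem Real.convexOn_tan : ConvexOn ℝ (Ico 0 (π / 2)) tan := by
  refine MonotoneOn.convexOn_of_deriv (convex_Ico _ _)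
    (fun x hx ↦ (continuousAt_tan.2 (cos_pos_of_mem_Ico hx).ne').continuousWithinAt)
    (fun x hx ↦ ?_) (fun x hx y hy hxy ↦ ?_) <;> rw [interior_Ico] at *
  · exact (differentiableAt_tan.2 (cos_pos_of_mem_Ico (Ioo_subset_Ico_self hx)).ne')
      |>.differentiableWithinAt
  · have hcos_y : 0 < cos y := cos_pos_of_mem_Ico (Ioo_subset_Ico_self hy)
    have hcos_le : cos y ≤ cos x :=
      cos_le_cos_of_nonneg_of_le_pi hx.1.le (by linarith [hy.2, pi_pos]) hxy
    rw [deriv_tan, deriv_tan]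
    exact one_div_le_one_div_of_le (by positivity) (pow_le_pow_left₀ hcos_y.le hcos_le 2)

theorem Real.tan_le_of_mem_Icc_zero_pi_div_four {θ : ℝ} (hθ : θ ∈ Icc 0 (π / 4)) :
    tan θ ≤ 4 * θ / π := by
  have hπ4 : π / 4 ∈ Ico 0 (π / 2) := ⟨by positivity, by linarith [pi_pos]⟩
  have hθ_eq : (4 * θ / π) • (π / 4) = θ := by
    rw [smul_eq_mul]; field_simp [pi_ne_zero]
  have h := convexOn_tan.map_smul_le_smul (t := 4 * θ / π) ⟨le_rfl, by positivity⟩ tan_zero.le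
    hπ4 (by have := hθ.1; positivity) ((div_le_one pi_pos).2 (by linarith [hθ.2]))
  rwa [hθ_eq, tan_pi_div_four, smul_eq_mul, mul_one] at h

/-- On `[0, π/4]`, `sec² θ ≤ 1 + 4θ/π`. -/
theorem sec_sq_le_linear (θ : ℝ) (hθ : θ ∈ Set.Icc 0 (π / 4)) :
    1 / Real.cos θ ^ 2 ≤ 1 + 4 * θ / π := by
  have hcos : cos θ ≠ 0 :=
    (cos_pos_of_mem_Ico ⟨hθ.1, hθ.2.trans_lt (by linarith [pi_pos])⟩).ne'
  have htan_nonneg : 0 ≤ tan θ :=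
    tan_nonneg_of_nonneg_of_le_pi_div_two hθ.1 (by linarith [hθ.2, pi_pos])
  have htan_le : tan θ ≤ 4 * θ / π := tan_le_of_mem_Icc_zero_pi_div_four hθ
  have htan_le_one : tan θ ≤ 1 :=
    htan_le.trans ((div_le_one pi_pos).2 (by linarith [hθ.2]))
  calc 1 / cos θ ^ 2 = 1 + tan θ ^ 2 := by rw [← inv_one_add_tan_sq hcos, one_div, inv_inv]
    _ ≤ 1 + tan θ := by nlinarith
    _ ≤ 1 + 4 * θ / π := by linarith
end

section
/- Let a nonnegative integer-valued random variable τ satisfy τ ≤ t - 2 almost surely and E[τ²] ≤ mB² for constants m, B > 0 and integer t ≥ 3. Then E[τ / √(t - τ - 1)] ≤ √(2m)·B/√t + 4mB²/t. -/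
/-!
Split according to whether `2τ + 2 ≤ t`. When it holds, `√(t - τ - 1) ≥ √(t/2)`; otherwise,
`τ` being an integer, `√(t - τ - 1) ≥ 1` and `τ ≥ t/4`, so `τ ≤ 4τ²/t`. Hence pointwise
`τ / √(t - τ - 1) ≤ (√2/√t) τ + (4/t) τ²`, and taking expectations with
`E[τ] ≤ √E[τ²] ≤ √m B` gives the bound.
-/

open MeasureTheory Real

lemma div_sqrt_sub_le {n t : ℕ} (h : n + 2 ≤ t) :
    (n : ℝ) / √((t : ℝ) - n - 1) ≤ √2 / √t * n + 4 / t * n ^ 2 := by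
  have ht : (0 : ℝ) < t := by exact_mod_cast (by omega : 0 < t)
  have hn : (0 : ℝ) ≤ n := n.cast_nonneg
  rcases le_or_gt (2 * n + 2) t with hsmall | hlarge
  · have hsmall : 2 * (n : ℝ) + 2 ≤ t := by exact_mod_cast hsmall
    calc (n : ℝ) / √((t : ℝ) - n - 1)
        ≤ n / √(t / 2) := by gcongr; linarith
      _ = √2 / √t * n := by rw [sqrt_div ht.le]; field_simp
      _ ≤ √2 / √t * n + 4 / t * n ^ 2 := le_add_of_nonneg_right (by positivity)
  · have hlarge : (t : ℝ) ≤ 2 * n + 1 := by exact_mod_cast (by omega : t ≤ 2 * n + 1)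
    have h : (n : ℝ) + 2 ≤ t := by exact_mod_cast h
    have hsqrt : 1 ≤ √((t : ℝ) - n - 1) := one_le_sqrt.2 (by linarith)
    calc (n : ℝ) / √((t : ℝ) - n - 1)
        ≤ n := div_le_self hn hsqrt
      _ ≤ 4 / t * n ^ 2 := by rw [div_mul_eq_mul_div, le_div_iff₀ ht]; nlinarith
      _ ≤ √2 / √t * n + 4 / t * n ^ 2 := le_add_of_nonneg_left (by positivity)

lemma integral_le_sqrt_integral_sq {Ω : Type*} [MeasurableSpace Ω] {μ : Measure Ω}
    [IsProbabilityMeasure μ] {X : Ω → ℝ} (hX : MemLp X 2 μ) :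
    ∫ ω, X ω ∂μ ≤ √(∫ ω, X ω ^ 2 ∂μ) := by
  have hsq : (∫ ω, X ω ∂μ) ^ 2 ≤ ∫ ω, X ω ^ 2 ∂μ := by
    have := ProbabilityTheory.variance_nonneg X μ
    rw [ProbabilityTheory.variance_eq_sub hX] at this
    simpa [Pi.pow_apply] using this
  exact le_sqrt_of_sq_le hsq

lemma memLp_comp_of_ae_le {Ω E : Type*} [MeasurableSpace Ω] [NormedAddCommGroup E]
    {μ : Measure Ω} [IsFiniteMeasure μ] {τ : Ω → ℕ} (hτ : Measurable τ) {N : ℕ}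
    (hN : ∀ᵐ ω ∂μ, τ ω ≤ N) (φ : ℕ → E) (p : ENNReal) :
    MemLp (fun ω => φ (τ ω)) p μ := by
  refine MemLp.of_bound (StronglyMeasurable.of_discrete.comp_measurable hτ).aestronglyMeasurable
    (∑ k ∈ Finset.range (N + 1), ‖φ k‖) ?_
  filter_upwards [hN] with ω hω
  exact Finset.single_le_sum (f := fun k => ‖φ k‖) (fun _ _ => norm_nonneg _)
    (Finset.mem_range.2 (by omega))

theorem delay_expectation_bound_general
    {Ω : Type*} [MeasurableSpace Ω] (μ : Measure Ω) [IsProbabilityMeasure μ]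
    (τ : Ω → ℕ) (hmeas : Measurable τ)
    (t : ℕ) (ht : 3 ≤ t) (m B : ℝ) (hB : 0 < B)
    (hbdd : ∀ᵐ ω ∂μ, τ ω ≤ t - 2)
    (hmoment : ∫ ω, ((τ ω : ℝ)) ^ 2 ∂μ ≤ m * B ^ 2) :
    ∫ ω, (τ ω : ℝ) / Real.sqrt ((t : ℝ) - (τ ω : ℝ) - 1) ∂μ
      ≤ Real.sqrt (2 * m) * B / Real.sqrt t + 4 * m * B ^ 2 / t := by
  have hL (φ : ℕ → ℝ) (p : ENNReal) : MemLp (fun ω => φ (τ ω)) p μ :=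
    memLp_comp_of_ae_le hmeas hbdd φ p
  have hI (φ : ℕ → ℝ) : Integrable (fun ω => φ (τ ω)) μ := memLp_one_iff_integrable.1 (hL φ 1)
  have hmean : ∫ ω, (τ ω : ℝ) ∂μ ≤ √m * B := calc
    ∫ ω, (τ ω : ℝ) ∂μ ≤ √(∫ ω, (τ ω : ℝ) ^ 2 ∂μ) := integral_le_sqrt_integral_sq (hL Nat.cast 2)
    _ ≤ √(m * B ^ 2) := sqrt_le_sqrt hmoment
    _ = √m * B := by rw [sqrt_mul' _ (sq_nonneg B), sqrt_sq hB.le]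
  calc ∫ ω, (τ ω : ℝ) / √((t : ℝ) - τ ω - 1) ∂μ
      ≤ ∫ ω, (√2 / √t * τ ω + 4 / t * (τ ω : ℝ) ^ 2) ∂μ :=
        integral_mono_ae (hI fun n => n / √((t : ℝ) - n - 1))
          (hI fun n => √2 / √t * n + 4 / t * (n : ℝ) ^ 2)
          (by filter_upwards [hbdd] with ω hω using div_sqrt_sub_le (by omega))
    _ = √2 / √t * ∫ ω, (τ ω : ℝ) ∂μ + 4 / t * ∫ ω, (τ ω : ℝ) ^ 2 ∂μ := by
        rw [integral_add ((hI Nat.cast).const_mul _) ((hI fun n => (n : ℝ) ^ 2).const_mul _),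
          integral_const_mul,
          integral_const_mul]
    _ ≤ √2 / √t * (√m * B) + 4 / t * (m * B ^ 2) := by gcongr
    _ = √(2 * m) * B / √t + 4 * m * B ^ 2 / t := by rw [sqrt_mul zero_le_two]; ring

/-- Bound on `E[τ/√(t-τ-1)]` for a nonnegative integer-valued random delay `τ`
with `τ ≤ t-2` almost surely and `E[τ²] ≤ mB²`. -/
theorem delay_expectation_bound
    {Ω : Type*} [MeasurableSpace Ω] (μ : Measure Ω) [IsProbabilityMeasure μ]
    (τ : Ω → ℕ) (hmeas : Measurable τ)
    (t : ℕ) (ht : 3 ≤ t) (m B : ℝ) (hm : 0 < m) (hB : 0 < B)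
    (hbdd : ∀ᵐ ω ∂μ, τ ω ≤ t - 2)
    (hmoment : ∫ ω, ((τ ω : ℝ)) ^ 2 ∂μ ≤ m * B ^ 2) :
    ∫ ω, (τ ω : ℝ) / Real.sqrt ((t : ℝ) - (τ ω : ℝ) - 1) ∂μ
      ≤ Real.sqrt (2 * m) * B / Real.sqrt t + 4 * m * B ^ 2 / t :=
  delay_expectation_bound_general μ τ hmeas t ht m B hB hbdd hmoment
end
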